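/- For e ∈ (0,1), define tr(U)(e) = e⁻⁵[ −e(33 − 35e²) + (33 − 46e² + 21e⁴) artanh(e) ]. Then tr(U)(e) > 0 for all e ∈ (0,1). -/

import Mathlib

/-!
The coefficient `33 - 46 e² + 21 e⁴` of `artanh e` is positive, and `artanh e` exceeds the
truncation `e + e³/3 + e⁵/5` of its series `∑ e^(2k+1)/(2k+1)`. Replacing `artanh e` by this
polynomial leaves `e⁵ (184 - 33 e² + 63 e⁴) / 15`, which is positive.
-/

open Real

/-- The inverse hyperbolic tangent (not yet in Mathlib). -/
noncomputable def artanh (x : ℝ) : ℝ := (1 / 2) * Real.log ((1 + x) / (1 - x))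

open Finset

theorem hasSum_artanh {x : ℝ} (hx : |x| < 1) :
    HasSum (fun k : ℕ => x ^ (2 * k + 1) / (2 * k + 1)) (_root_.artanh x) := by
  obtain ⟨hx₀, hx₁⟩ := abs_lt.mp hx
  have hlog : _root_.artanh x = 1 / 2 * (log (1 + x) - log (1 - x)) := by
    rw [_root_.artanh, log_div (by linarith) (by linarith)]
  have hterm : (fun k : ℕ => x ^ (2 * k + 1) / (2 * k + 1))
      = fun k : ℕ => 1 / 2 * (2 * (1 / (2 * k + 1)) * x ^ (2 * k + 1)) := by
    funext k
    field_simp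
  rw [hterm, hlog]
  exact (hasSum_log_sub_log_of_abs_lt_one hx).mul_left _

theorem sum_range_lt_artanh (n : ℕ) {x : ℝ} (hx₀ : 0 < x) (hx₁ : x < 1) :
    ∑ k ∈ range n, x ^ (2 * k + 1) / (2 * k + 1) < _root_.artanh x :=
  calc ∑ k ∈ range n, x ^ (2 * k + 1) / (2 * k + 1)
      < ∑ k ∈ range (n + 1), x ^ (2 * k + 1) / (2 * k + 1) := by
        rw [sum_range_succ]
        linarith [show 0 < x ^ (2 * n + 1) / (2 * n + 1) by positivity]
    _ ≤ _root_.artanh x :=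
        sum_le_hasSum _ (fun k _ => by positivity)
          (hasSum_artanh (abs_lt.mpr ⟨by linarith, hx₁⟩))

theorem transversal_trace_pos :
    ∀ e ∈ Set.Ioo (0 : ℝ) 1,
      0 < e⁻¹ ^ 5 * (-(e * (33 - 35 * e ^ 2))
        + (33 - 46 * e ^ 2 + 21 * e ^ 4) * _root_.artanh e) := by
  rintro e ⟨he₀, he₁⟩
  have htaylor : e + e ^ 3 / 3 + e ^ 5 / 5 < _root_.artanh e := by
    have h := sum_range_lt_artanh 3 he₀ he₁
    norm_num [sum_range_succ] at h
    linarith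
  have hcoeff : 0 < 33 - 46 * e ^ 2 + 21 * e ^ 4 := by nlinarith [sq_nonneg (21 * e ^ 2 - 23)]
  have hremainder : 0 < 184 - 33 * e ^ 2 + 63 * e ^ 4 := by nlinarith [sq_nonneg (e ^ 2)]
  refine mul_pos (by positivity) ?_
  calc 0 < e ^ 5 * (184 - 33 * e ^ 2 + 63 * e ^ 4) / 15 := by positivity
    _ = -(e * (33 - 35 * e ^ 2))
          + (33 - 46 * e ^ 2 + 21 * e ^ 4) * (e + e ^ 3 / 3 + e ^ 5 / 5) := by ring
    _ < -(e * (33 - 35 * e ^ 2)) + (33 - 46 * e ^ 2 + 21 * e ^ 4) * _root_.artanh e := by gcongr
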